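/- Let S be a monoid with zero, λ a nonempty set, and H₁ the group of units of S. For [φ, h, u] ∈ 𝒮_λ × Aut(S) × H₁^λ, the induced automorphism σ_{[φ,h,u]} of B⁰_λ(S), given by (α, s, β) ↦ (φ(α), u(α)·h(s)·(u(β))⁻¹, φ(β)) and 0 ↦ 0, is the identity automorphism if and only if φ is the identity map of λ, u is a constant map with value some ũ ∈ H₁, and h(s) = ũ⁻¹·s·ũ for every s ∈ S. -/

import Mathlib

/-- The Brandt λ⁰-extension `B⁰_Λ(S)` of a semigroup `S` with zero: its underlying
set is `(Λ × (S \ {0_S}) × Λ) ∪ {0}`, where `none` plays the role of the zero `0`. -/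
def Brandt (Λ S : Type*) [Zero S] : Type _ :=
  Option (Λ × {s : S // s ≠ 0} × Λ)

namespace Brandt

variable {Λ S : Type*}

instance [Zero S] : Zero (Brandt Λ S) := ⟨none⟩

open Classical in
/-- `(α, a, β)·(γ, b, δ) = (α, ab, δ)` if `β = γ` and `ab ≠ 0_S`, and `0` otherwise;
`0` is a two-sided zero. -/
noncomputable instance [Zero S] [Mul S] : Mul (Brandt Λ S) :=
  ⟨fun x y =>
    match x, y with
    | some (α, a, β), some (γ, b, δ) =>
        if h : β = γ ∧ a.1 * b.1 ≠ 0 then some (α, ⟨a.1 * b.1, h.2⟩, δ) else 0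
    | _, _ => 0⟩

open Classical in
/-- `Brandt.mk α s β` is the element `(α, s, β)` of `B⁰_Λ(S)` if `s ≠ 0`, and `0` otherwise. -/
noncomputable def mk [Zero S] (α : Λ) (s : S) (β : Λ) : Brandt Λ S :=
  if h : s ≠ 0 then some (α, ⟨s, h⟩, β) else 0

end Brandt

/-- An automorphism of a semigroup: a bijective map preserving the multiplication. -/
def IsSemigroupAut {T : Type*} [Mul T] (σ : T → T) : Prop :=
  Function.Bijective σ ∧ ∀ x y : T, σ (x * y) = σ x * σ y

/-- `brandtAut φ h u` is the automorphism `σ_{[φ,h,u]}` of `B⁰_Λ(S)` given by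
`(α, s, β) ↦ (φ(α), u(α)·h(s)·(u(β))⁻¹, φ(β))` and `0 ↦ 0`. -/
noncomputable def brandtAut {Λ S : Type*} [MonoidWithZero S]
    (φ : Λ ≃ Λ) (h : S ≃* S) (u : Λ → Sˣ) :
    Brandt Λ S → Brandt Λ S
  | some (α, s, β) => Brandt.mk (φ α) ((u α : S) * h s.1 * ((u β)⁻¹ : Sˣ)) (φ β)
  | none => 0

namespace Brandt

variable {Λ S : Type*} [Zero S]

theorem mk_of_ne_zero {s : S} (hs : s ≠ 0) (α β : Λ) : mk α s β = some (α, ⟨s, hs⟩, β) :=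
  dif_pos hs

theorem mk_eq_some_iff {α β γ δ : Λ} {s : S} {t : {s : S // s ≠ 0}} :
    mk α s β = some (γ, t, δ) ↔ α = γ ∧ s = t ∧ β = δ := by
  by_cases hs : s = 0
  · subst hs
    simp only [mk, ne_eq, not_true_eq_false, ↓reduceDIte]
    exact iff_of_false (fun h => Option.some_ne_none _ h.symm) fun ⟨_, h0, _⟩ => t.2 h0.symm
  · rw [mk_of_ne_zero hs]
    exact Option.some_inj.trans (by simp [Subtype.ext_iff])

end Brandt

section

variable {Λ S : Type*} [MonoidWithZero S] (φ : Λ ≃ Λ) (h : S ≃* S) (u : Λ → Sˣ)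

theorem brandtAut_some (α β : Λ) (s : {s : S // s ≠ 0}) :
    brandtAut φ h u (some (α, s, β)) = Brandt.mk (φ α) ((u α : S) * h s * ((u β)⁻¹ : Sˣ)) (φ β) :=
  rfl

theorem brandtAut_eq_id_iff [Nontrivial S] :
    brandtAut φ h u = id ↔
      (∀ α, φ α = α) ∧ ∀ α β (s : S), (u α : S) * h s * ((u β)⁻¹ : Sˣ) = s := by
  constructor
  · intro H
    have hfix : ∀ α β (s : S) (hs : s ≠ 0),
        φ α = α ∧ (u α : S) * h s * ((u β)⁻¹ : Sˣ) = s ∧ φ β = β := fun α β s hs =>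
      Brandt.mk_eq_some_iff.mp (congrFun H (some (α, ⟨s, hs⟩, β)))
    refine ⟨fun α => (hfix α α 1 one_ne_zero).1, fun α β s => ?_⟩
    rcases eq_or_ne s 0 with rfl | hs
    · simp
    · exact (hfix α β s hs).2.1
  · rintro ⟨hφ, hconj⟩
    funext x
    rcases x with _ | ⟨α, s, β⟩
    · rfl
    · rw [brandtAut_some, hφ, hφ, hconj, Brandt.mk_of_ne_zero s.2]
      rfl

end

theorem conj_units_eq_self_iff {Λ M F : Type*} [Nonempty Λ] [Monoid M] [FunLike F M M]
    [OneHomClass F M M] (h : F) (u : Λ → Mˣ) :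
    (∀ α β (s : M), (u α : M) * h s * ((u β)⁻¹ : Mˣ) = s) ↔
      ∃ v : Mˣ, (∀ α, u α = v) ∧ ∀ s : M, h s = (v⁻¹ : Mˣ) * s * (v : M) := by
  constructor
  · intro H
    have hu : ∀ α β, u α = u β := fun α β =>
      Units.ext (Units.mul_inv_eq_one.mp (by simpa using H α β 1))
    obtain ⟨α₀⟩ := ‹Nonempty Λ›
    refine ⟨u α₀, fun α => hu α α₀, fun s => ?_⟩
    conv_rhs => rw [← H α₀ α₀ s]
    simp [mul_assoc]
  · rintro ⟨v, hu, hh⟩ α β s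
    simp [hu, hh, mul_assoc]

/-- For `[φ, h, u] ∈ 𝒮_Λ × Aut(S) × H₁^Λ`, the induced automorphism `σ_{[φ,h,u]}`
of `B⁰_Λ(S)` is the identity automorphism if and only if `φ` is the identity map of
`Λ`, `u` is a constant map with value some `ũ ∈ H₁`, and `h(s) = ũ⁻¹·s·ũ` for every
`s ∈ S`. -/
theorem stmt_10 {Λ S : Type*} [Nonempty Λ] [MonoidWithZero S] [Nontrivial S]
    (φ : Λ ≃ Λ) (h : S ≃* S) (u : Λ → Sˣ) :
    brandtAut φ h u = id ↔
      (∀ α : Λ, φ α = α) ∧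
      ∃ v : Sˣ, (∀ α : Λ, u α = v) ∧ ∀ s : S, h s = (v⁻¹ : Sˣ) * s * (v : S) := by
  rw [brandtAut_eq_id_iff, conj_units_eq_self_iff]
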